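/- arXiv:2312.12257 — 6 statements merged into one kernel-verified Lean document; each statement's English description precedes it below -/
import Mathlib

section
/- Let X be a topological space, Y a set, and F a nowhere constant family of maps from X to Y. Let B be a π-base of X. For each f ∈ F set B_f = {B ∈ B : f is not constant on B} and U_f = ⋃(B \ B_f). Let A be a pairwise disjoint family of subsets of Y such that for every f ∈ F, every B ∈ B_f, and every A ∈ A we have A ∩ f[B \ U_f] ≠ ∅. Then there is a family {D(A) : A ∈ A}, indexed by A, of pairwise disjoint dense subsets of X; in particular X is |A|-resolvable. -/
/-!
Well-order the maps. At a point `x`, let `f_x` be the least map of `F` that is not constant on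
any member of `𝓑` containing `x`, and put `x` into `D(A)` when `f_x x ∈ A`; the `D(A)` are
disjoint because the `A` are. Given `B ∈ 𝓑`, let `g` be the least map of `F` not constant on `B`,
and pick `x ∈ B \ U_g` with `g x ∈ A`. Every admissible map at `x` is non-constant on `B ∋ x`,
so `f_x = g` and `x ∈ B ∩ D(A)`; hence `D(A)` meets every member of the π-base.
-/

open Set

theorem WellFounded.min_eq_of_subset {α : Type*} {r : α → α → Prop} [Std.Trichotomous r]
    (wf : WellFounded r) {s t : Set α} (hst : s ⊆ t) (ht : t.Nonempty) (hs : wf.min t ht ∈ s) :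
    wf.min s ⟨_, hs⟩ = wf.min t ht :=
  wf.min_eq_of_forall_not_lt hs fun _ hx => wf.not_lt_min t (hst hx)

namespace Resolvability

variable {X Y : Type*}

/-- The set `U_f` of the statement. -/
def constancyUnion (𝓑 : Set (Set X)) (f : X → Y) : Set X :=
  ⋃₀ {B ∈ 𝓑 | ¬ (f '' B).Nontrivial}

theorem nontrivial_image_of_notMem_constancyUnion {𝓑 : Set (Set X)} {f : X → Y} {B : Set X}
    {x : X} (hB : B ∈ 𝓑) (hxB : x ∈ B) (hx : x ∉ constancyUnion 𝓑 f) : (f '' B).Nontrivial := by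
  by_contra hf
  exact hx ⟨B, ⟨hB, hf⟩, hxB⟩

variable {r : (X → Y) → (X → Y) → Prop} (wf : WellFounded r) (F : Set (X → Y))
  (𝓑 : Set (Set X))

noncomputable def resolvingSet (A : Set Y) : Set X :=
  {x | ∃ h : {f ∈ F | x ∉ constancyUnion 𝓑 f}.Nonempty, wf.min _ h x ∈ A}

theorem disjoint_resolvingSet {A A' : Set Y} (hAA' : Disjoint A A') :
    Disjoint (resolvingSet wf F 𝓑 A) (resolvingSet wf F 𝓑 A') :=
  disjoint_left.mpr fun _ ⟨_, hxA⟩ ⟨_, hxA'⟩ => disjoint_left.mp hAA' hxA hxA'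

variable {F 𝓑}

theorem inter_resolvingSet_nonempty [Std.Trichotomous r] {A : Set Y} {B : Set X} (hB : B ∈ 𝓑)
    (hBF : {f ∈ F | (f '' B).Nontrivial}.Nonempty)
    (hA : ∀ f ∈ F, (f '' B).Nontrivial → (A ∩ f '' (B \ constancyUnion 𝓑 f)).Nonempty) :
    (B ∩ resolvingSet wf F 𝓑 A).Nonempty := by
  obtain ⟨hgF, hgB⟩ := wf.min_mem _ hBF
  obtain ⟨_, hyA, x, ⟨hxB, hxU⟩, rfl⟩ := hA _ hgF hgB
  have hsub : {f ∈ F | x ∉ constancyUnion 𝓑 f} ⊆ {f ∈ F | (f '' B).Nontrivial} :=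
    fun f ⟨hf, hfx⟩ => ⟨hf, nontrivial_image_of_notMem_constancyUnion hB hxB hfx⟩
  have hmin := wf.min_eq_of_subset hsub hBF ⟨hgF, hxU⟩
  exact ⟨x, hxB, ⟨_, hgF, hxU⟩, by rwa [hmin]⟩

theorem dense_resolvingSet [TopologicalSpace X] [Std.Trichotomous r] {A : Set Y}
    (hNWC : ∀ U : Set X, IsOpen U → U.Nonempty → ∃ f ∈ F, (f '' U).Nontrivial)
    (h𝓑open : ∀ B ∈ 𝓑, IsOpen B) (h𝓑ne : ∀ B ∈ 𝓑, B.Nonempty)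
    (h𝓑base : ∀ U : Set X, IsOpen U → U.Nonempty → ∃ B ∈ 𝓑, B ⊆ U)
    (hA : ∀ f ∈ F, ∀ B ∈ 𝓑, (f '' B).Nontrivial →
      (A ∩ f '' (B \ constancyUnion 𝓑 f)).Nonempty) :
    Dense (resolvingSet wf F 𝓑 A) := by
  refine dense_iff_inter_open.mpr fun V hV hVne => ?_
  obtain ⟨B, hB, hBV⟩ := h𝓑base V hV hVne
  have hBF := hNWC B (h𝓑open B hB) (h𝓑ne B hB)
  exact (inter_resolvingSet_nonempty wf hB hBF fun f hf => hA f hf B hB).mono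
    (inter_subset_inter_left _ hBV)

end Resolvability

/-- **Theorem 2.1 (general resolvability theorem).**
Let `F` be a nowhere constant family of maps of the topological space `X` to the set `Y`,
let `𝓑` be a π-base of `X`, and for `f ∈ F` put `𝓑_f = {B ∈ 𝓑 : f is not constant on B}`
and `U_f = ⋃ (𝓑 \ 𝓑_f)`. If `𝓐` is a pairwise disjoint family of subsets of `Y` such that
`A ∩ f[B \ U_f] ≠ ∅` for all `f ∈ F`, `B ∈ 𝓑_f`, `A ∈ 𝓐`, then there is a family
`{D(A) : A ∈ 𝓐}` of pairwise disjoint dense subsets of `X`. -/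
theorem general_resolvability {X Y : Type*} [TopologicalSpace X]
    (F : Set (X → Y)) (𝓑 : Set (Set X)) (𝓐 : Set (Set Y))
    (hNWC : ∀ U : Set X, IsOpen U → U.Nonempty → ∃ f ∈ F, (f '' U).Nontrivial)
    (h𝓑open : ∀ B ∈ 𝓑, IsOpen B)
    (h𝓑ne : ∀ B ∈ 𝓑, B.Nonempty)
    (h𝓑base : ∀ U : Set X, IsOpen U → U.Nonempty → ∃ B ∈ 𝓑, B ⊆ U)
    (h𝓐 : 𝓐.Pairwise fun A A' => Disjoint A A')
    (hmain : ∀ f ∈ F, ∀ B ∈ 𝓑, (f '' B).Nontrivial → ∀ A ∈ 𝓐,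
      (A ∩ f '' (B \ ⋃₀ {B' ∈ 𝓑 | ¬ (f '' B').Nontrivial})).Nonempty) :
    ∃ D : Set Y → Set X, (∀ A ∈ 𝓐, Dense (D A)) ∧
      𝓐.Pairwise fun A A' => Disjoint (D A) (D A') := by
  let wf := (WellOrderingRel.isWellOrder (α := X → Y)).wf
  refine ⟨Resolvability.resolvingSet wf F 𝓑, fun A hA => ?_, fun A hA A' hA' hne => ?_⟩
  · exact Resolvability.dense_resolvingSet wf hNWC h𝓑open h𝓑ne h𝓑base fun f hf B hB hfB =>
      hmain f hf B hB hfB A hA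
  · exact Resolvability.disjoint_resolvingSet wf F 𝓑 (h𝓐 hA hA' hne)
end

section
/- Let X be a topological space, B a π-base of X consisting of connected sets, and f : X → ℝ continuous. Set B_f = {B ∈ B : f is not constant on B} and U_f = ⋃(B \ B_f). Then for every B ∈ B_f one has f[B] = f[B \ U_f]. -/
/-!
If `f` took some value `f x` on `B` only inside `U_f`, then the fibre of `f` over `f x` in `B`
would be covered by the open union `W` of the members of `𝓑` on which `f` is identically `f x`.
So `B` would be covered by the disjoint open sets `W` and `f ⁻¹' {f x}ᶜ`, and connectedness of
`B` forces `B ⊆ W`, i.e. `f` is constant on `B`.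
-/

open Set

theorem IsPreconnected.image_subset_singleton {X Y : Type*} [TopologicalSpace X]
    [TopologicalSpace Y] [T1Space Y] {f : X → Y} (hf : Continuous f) {B W : Set X} {c : Y}
    (hB : IsPreconnected B) (hW : IsOpen W) (hWf : W ⊆ f ⁻¹' {c}) (hBW : (B ∩ W).Nonempty)
    (hfiber : B ∩ f ⁻¹' {c} ⊆ W) : f '' B ⊆ {c} := by
  have hcover : B ⊆ W ∪ f ⁻¹' {c}ᶜ := fun y hy =>
    (em (f y = c)).imp (fun h => hfiber ⟨hy, h⟩) id
  have hdisj : Disjoint W (f ⁻¹' {c}ᶜ) := by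
    rw [preimage_compl]
    exact disjoint_compl_right.mono_left hWf
  rcases hB.subset_or_subset hW (isOpen_compl_singleton.preimage hf) hdisj hcover with hBW' | hBc
  · exact image_subset_iff.2 (hBW'.trans hWf)
  · obtain ⟨y, hyB, hyW⟩ := hBW
    exact absurd (hWf hyW) (hBc hyB)

theorem mem_sUnion_image_subset_singleton {X Y : Type*} {𝓑 : Set (Set X)} {f : X → Y} {y : X}
    (hy : y ∈ ⋃₀ {B' ∈ 𝓑 | ¬ (f '' B').Nontrivial}) :
    y ∈ ⋃₀ {B' ∈ 𝓑 | f '' B' ⊆ {f y}} := by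
  obtain ⟨B', ⟨hB', hconst⟩, hyB'⟩ := hy
  exact ⟨B', ⟨hB', (not_nontrivial_iff.1 hconst).eq_singleton_of_mem
    (mem_image_of_mem f hyB') ▸ subset_rfl⟩, hyB'⟩

theorem image_eq_image_diff_const_union_general {X : Type*} [TopologicalSpace X]
    (𝓑 : Set (Set X))
    (h𝓑open : ∀ B ∈ 𝓑, IsOpen B)
    (h𝓑conn : ∀ B ∈ 𝓑, IsConnected B)
    (f : X → ℝ) (hf : Continuous f)
    (B : Set X) (hB : B ∈ 𝓑) (hBf : (f '' B).Nontrivial) :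
    f '' B = f '' (B \ ⋃₀ {B' ∈ 𝓑 | ¬ (f '' B').Nontrivial}) := by
  refine (image_mono sdiff_subset).antisymm' ?_
  rintro _ ⟨x, hxB, rfl⟩
  by_contra hx
  have hfiber : B ∩ f ⁻¹' {f x} ⊆ ⋃₀ {B' ∈ 𝓑 | f '' B' ⊆ {f x}} := by
    rintro y ⟨hyB, hyx : f y = f x⟩
    have hyU : y ∈ ⋃₀ {B' ∈ 𝓑 | ¬ (f '' B').Nontrivial} :=
      by_contra fun hyU => hx ⟨y, ⟨hyB, hyU⟩, hyx⟩
    exact hyx ▸ mem_sUnion_image_subset_singleton hyU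
  have hWopen : IsOpen (⋃₀ {B' ∈ 𝓑 | f '' B' ⊆ {f x}}) :=
    isOpen_sUnion fun B' hB' => h𝓑open B' hB'.1
  have hWf : ⋃₀ {B' ∈ 𝓑 | f '' B' ⊆ {f x}} ⊆ f ⁻¹' {f x} :=
    sUnion_subset fun B' hB' => image_subset_iff.1 hB'.2
  exact hBf.not_subset_singleton <| (h𝓑conn B hB).isPreconnected.image_subset_singleton hf
    hWopen hWf ⟨x, hxB, hfiber ⟨hxB, rfl⟩⟩ hfiber

/-- **The Claim in Corollary 2.2.** Let `𝓑` be a π-base of `X` consisting of connected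
sets and `f : X → ℝ` continuous. With `𝓑_f = {B ∈ 𝓑 : f not constant on B}` and
`U_f = ⋃ (𝓑 \ 𝓑_f)`, for every `B ∈ 𝓑_f` we have `f[B] = f[B \ U_f]`. -/
theorem image_eq_image_diff_const_union {X : Type*} [TopologicalSpace X]
    (𝓑 : Set (Set X))
    (h𝓑open : ∀ B ∈ 𝓑, IsOpen B)
    (h𝓑ne : ∀ B ∈ 𝓑, B.Nonempty)
    (h𝓑conn : ∀ B ∈ 𝓑, IsConnected B)
    (h𝓑base : ∀ U : Set X, IsOpen U → U.Nonempty → ∃ B ∈ 𝓑, B ⊆ U)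
    (f : X → ℝ) (hf : Continuous f)
    (B : Set X) (hB : B ∈ 𝓑) (hBf : (f '' B).Nontrivial) :
    f '' B = f '' (B \ ⋃₀ {B' ∈ 𝓑 | ¬ (f '' B').Nontrivial}) :=
  image_eq_image_diff_const_union_general 𝓑 h𝓑open h𝓑conn f hf B hB hBf
end

section
/- Every crowded, locally connected, functionally Hausdorff topological space X is 𝔠-resolvable, where 𝔠 = 2^ℵ₀; i.e., X admits a family of 𝔠 pairwise disjoint dense subsets. -/
/-!
By Zorn's lemma there is a maximal family `C` of pairwise disjoint sets `Y`, each carrying a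
function `f_Y : X → ℝ` that maps every nonempty relatively open subset of `Y` onto a set with
nonempty interior. Pulling back `𝔠` pairwise disjoint dense subsets of `ℝ` (cosets of `ℚ`)
along the `f_Y` gives `𝔠` pairwise disjoint dense subsets of `X`, as soon as `⋃₀ C` is dense,
i.e. as soon as every nonempty open `U` contains such a `Y`. One may take for `Y` the points of
`U` near which `f` is not constant, where `f` separates two points of a connected open subset of
`U`: on a connected set on which `f` takes the values `a ≠ b`, every level strictly between `a`
and `b` contains such a point, since otherwise that level set would be clopen.
-/

open Set Filter Topology Function Cardinal

section Resolvability

variable {X Z : Type*} [TopologicalSpace X] [TopologicalSpace Z]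

def HasInteriorImagesOn (f : X → Z) (Y : Set X) : Prop :=
  ∀ O : Set X, IsOpen O → (O ∩ Y).Nonempty → (interior (f '' (O ∩ Y))).Nonempty

theorem HasInteriorImagesOn.open_inter {f : X → Z} {Y : Set X} (h : HasInteriorImagesOn f Y)
    {U : Set X} (hU : IsOpen U) : HasInteriorImagesOn f (U ∩ Y) := by
  intro O hO hne
  rw [← inter_assoc] at hne ⊢
  exact h _ (hO.inter hU) hne

theorem exists_pairwiseDisjoint_dense_sUnion {P : Set X → Prop}
    (h : ∀ U : Set X, IsOpen U → U.Nonempty → ∃ Y ⊆ U, Y.Nonempty ∧ P Y) :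
    ∃ C : Set (Set X), (∀ Y ∈ C, P Y) ∧ C.PairwiseDisjoint id ∧ Dense (⋃₀ C) := by
  obtain ⟨C, ⟨hCP, hCdisj⟩, hCmax⟩ :=
    zorn_subset {C : Set (Set X) | (∀ Y ∈ C, P Y) ∧ C.PairwiseDisjoint id} fun c hc hchain =>
      ⟨⋃₀ c, ⟨fun Y ⟨C, hC, hY⟩ => (hc hC).1 Y hY,
        (pairwiseDisjoint_sUnion hchain.directedOn).2 fun _ hC => (hc hC).2⟩,
        fun _ => subset_sUnion_of_mem⟩
  refine ⟨C, hCP, hCdisj, dense_iff_inter_open.2 fun U hU hUne => ?_⟩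
  by_contra hdisj
  rw [not_nonempty_iff_eq_empty, ← disjoint_iff_inter_eq_empty, disjoint_sUnion_right] at hdisj
  obtain ⟨Y, hYU, ⟨y, hy⟩, hPY⟩ := h U hU hUne
  have hYdisj : ∀ Y' ∈ C, Disjoint Y Y' := fun Y' hY' => (hdisj Y' hY').mono_left hYU
  have hYC : Y ∈ C := hCmax ⟨forall_mem_insert.2 ⟨hPY, hCP⟩,
    hCdisj.insert fun Y' hY' _ => hYdisj Y' hY'⟩ (subset_insert Y C) (mem_insert Y C)
  exact disjoint_left.1 (hYdisj Y hYC) hy hy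

theorem exists_dense_pairwise_disjoint_of_dense_sUnion {ι : Type*} {S : ι → Set Z}
    (hS : ∀ i, Dense (S i)) (hSdisj : Pairwise (Disjoint on S)) {C : Set (Set X)}
    (hC : ∀ Y ∈ C, ∃ f : X → Z, HasInteriorImagesOn f Y) (hCdisj : C.PairwiseDisjoint id)
    (hCdense : Dense (⋃₀ C)) :
    ∃ D : ι → Set X, (∀ i, Dense (D i)) ∧ Pairwise (Disjoint on D) := by
  choose f hf using hC
  refine ⟨fun i => ⋃ (Y) (hY : Y ∈ C), Y ∩ f Y hY ⁻¹' S i, fun i => ?_,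
    fun i j hij => ?_⟩
  · refine dense_iff_inter_open.2 fun U hU hUne => ?_
    obtain ⟨x, hxU, Y, hYC, hxY⟩ := hCdense.inter_open_nonempty U hU hUne
    obtain ⟨_, hs, hwS⟩ :=
      (hS i).inter_open_nonempty _ isOpen_interior (hf Y hYC U hU ⟨x, hxU, hxY⟩)
    obtain ⟨w, hw, rfl⟩ := interior_subset hs
    exact ⟨w, hw.1, mem_iUnion₂.2 ⟨Y, hYC, hw.2, hwS⟩⟩
  · simp only [onFun, disjoint_iUnion_left, disjoint_iUnion_right]
    intro Y' hY' Y hY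
    rcases eq_or_ne Y Y' with rfl | hne
    · exact ((hSdisj hij).preimage (f Y hY)).inter_left' Y |>.inter_right' Y
    · exact (hCdisj hY hY' hne).mono inter_subset_left inter_subset_left

end Resolvability

section NonConstantLocus

variable {X Z : Type*} [TopologicalSpace X]

def nonConstantLocus (f : X → Z) : Set X := {z | ¬ ∀ᶠ w in 𝓝 z, f w = f z}

theorem IsPreconnected.uIoo_subset_image_inter_nonConstantLocus [LinearOrder Z]
    [TopologicalSpace Z] [OrderClosedTopology Z] {V : Set X} (hV : IsPreconnected V)
    {f : X → Z} (hf : Continuous f) {p q : X} (hp : p ∈ V) (hq : q ∈ V) :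
    uIoo (f p) (f q) ⊆ f '' (V ∩ nonConstantLocus f) := by
  intro c hc
  by_contra hcon
  have hlevel : V ∩ f ⁻¹' {c} ⊆ interior (f ⁻¹' {c}) := by
    rintro z ⟨hzV, hzc : f z = c⟩
    rw [mem_interior_iff_mem_nhds]
    by_contra hz
    exact hcon ⟨z, ⟨hzV, fun h => hz (h.mono fun w hw => hw.trans hzc)⟩, hzc⟩
  obtain ⟨z, hzV, hzc⟩ : c ∈ f '' V :=
    (hV.image f hf.continuousOn).ordConnected.uIcc_subset (mem_image_of_mem f hp)
      (mem_image_of_mem f hq) (uIoo_subset_uIcc_self hc)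
  have hpc : f p ≠ c := fun h => left_notMem_uIoo (h ▸ hc)
  obtain ⟨w, -, hw, hwc⟩ := hV _ _ isOpen_interior (isClosed_singleton.preimage hf).isOpen_compl
    (fun x hx => (em (f x = c)).imp (fun h => hlevel ⟨hx, h⟩) id)
    ⟨z, hzV, hlevel ⟨hzV, hzc⟩⟩ ⟨p, hp, hpc⟩
  exact hwc (interior_subset hw)

theorem hasInteriorImagesOn_nonConstantLocus [LocallyConnectedSpace X] [LinearOrder Z]
    [DenselyOrdered Z] [TopologicalSpace Z] [OrderTopology Z] {f : X → Z} (hf : Continuous f) :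
    HasInteriorImagesOn f (nonConstantLocus f) := by
  rintro O hO ⟨z, hzO, hz⟩
  set V := connectedComponentIn O z
  have hVO : V ⊆ O := connectedComponentIn_subset O z
  obtain ⟨w, hwV, hwz⟩ : ∃ w ∈ V, f w ≠ f z := by
    by_contra! h
    exact hz <| eventually_of_mem
      (hO.connectedComponentIn.mem_nhds (mem_connectedComponentIn hzO)) h
  have himage := isPreconnected_connectedComponentIn.uIoo_subset_image_inter_nonConstantLocus hf
    hwV (mem_connectedComponentIn hzO)
  exact (nonempty_uIoo.2 hwz).mono <| interior_maximal
    (himage.trans (image_mono (inter_subset_inter_left _ hVO))) isOpen_Ioo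

theorem exists_continuous_inter_nonConstantLocus_nonempty [LocallyConnectedSpace X]
    (hcrowded : ∀ x : X, ¬ IsOpen ({x} : Set X))
    (hfunHaus : ∀ x y : X, x ≠ y → ∃ f : X → ℝ, Continuous f ∧ f x ≠ f y)
    {U : Set X} (hU : IsOpen U) (hUne : U.Nonempty) :
    ∃ f : X → ℝ, Continuous f ∧ (U ∩ nonConstantLocus f).Nonempty := by
  obtain ⟨x, hx⟩ := hUne
  set W := connectedComponentIn U x
  have hWopen : IsOpen W := hU.connectedComponentIn
  obtain ⟨p, hp, q, hq, hpq⟩ : W.Nontrivial :=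
    (nonempty_of_mem (mem_connectedComponentIn hx)).exists_eq_singleton_or_nontrivial.resolve_left
      fun ⟨a, ha⟩ => hcrowded a (ha ▸ hWopen)
  obtain ⟨f, hf, hfpq⟩ := hfunHaus p q hpq
  obtain ⟨_, ⟨z, hz, -⟩⟩ := (nonempty_uIoo.2 hfpq).mono
    (isPreconnected_connectedComponentIn.uIoo_subset_image_inter_nonConstantLocus hf hp hq)
  exact ⟨f, hf, z, connectedComponentIn_subset U x hz.1, hz.2⟩

end NonConstantLocus

theorem QuotientAddGroup.dense_preimage_mk_singleton {G : Type*} [AddGroup G] [TopologicalSpace G]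
    [ContinuousConstVAdd G G] {A : AddSubgroup G} (hA : Dense (A : Set G)) (c : G ⧸ A) :
    Dense ((QuotientAddGroup.mk : G → G ⧸ A) ⁻¹' {c}) := by
  refine (hA.vadd (Quotient.out c)).mono ?_
  rintro _ ⟨a, ha, rfl⟩
  exact (QuotientAddGroup.mk_add_of_mem _ ha).trans (QuotientAddGroup.out_eq' c)

theorem AddSubgroup.mk_le_mk_quotient_of_countable {G : Type*} [AddGroup G] (A : AddSubgroup G)
    [Countable A] (hG : ℵ₀ < #G) : #G ≤ #(G ⧸ A) := by
  by_contra! h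
  have hprod : #G = #(G ⧸ A) * #A := by
    rw [mk_congr A.addGroupEquivQuotientProdAddSubgroup, mk_prod, lift_id, lift_id]
  exact (mul_lt_of_lt hG.le h (mk_le_aleph0.trans_lt hG)).ne hprod.symm

theorem exists_dense_pairwise_disjoint_real :
    ∃ S : ℝ → Set ℝ, (∀ r, Dense (S r)) ∧ Pairwise (Disjoint on S) := by
  set A : AddSubgroup ℝ := (Rat.castHom ℝ).toAddMonoidHom.range
  have hA : (A : Set ℝ) = range ((↑) : ℚ → ℝ) := AddMonoidHom.coe_range _
  have : Countable A := (hA ▸ countable_range _ : (A : Set ℝ).Countable).to_subtype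
  obtain ⟨j⟩ : Nonempty (ℝ ↪ ℝ ⧸ A) := by
    rw [← Cardinal.le_def]
    exact A.mk_le_mk_quotient_of_countable (mk_real ▸ aleph0_lt_continuum)
  exact ⟨fun r => QuotientAddGroup.mk ⁻¹' {j r},
    fun r => QuotientAddGroup.dense_preimage_mk_singleton (hA ▸ Rat.denseRange_cast) _,
    fun r s hrs => (disjoint_singleton.2 (j.injective.ne hrs)).preimage _⟩

/-- Every crowded, locally connected, functionally Hausdorff space is `𝔠`-resolvable,
i.e. admits a family, indexed by `ℝ` (a set of cardinality `𝔠 = 2^ℵ₀`),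
of pairwise disjoint dense subsets. -/
theorem crowded_locallyConnected_functionallyHausdorff_continuum_resolvable
    {X : Type*} [TopologicalSpace X] [LocallyConnectedSpace X]
    (hcrowded : ∀ x : X, ¬ IsOpen ({x} : Set X))
    (hfunHaus : ∀ x y : X, x ≠ y → ∃ f : X → ℝ, Continuous f ∧ f x ≠ f y) :
    ∃ D : ℝ → Set X, (∀ r : ℝ, Dense (D r)) ∧ Pairwise (Function.onFun Disjoint D) := by
  obtain ⟨S, hSdense, hSdisj⟩ := exists_dense_pairwise_disjoint_real
  obtain ⟨C, hCgood, hCdisj, hCdense⟩ :=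
    exists_pairwiseDisjoint_dense_sUnion (P := fun Y => ∃ f : X → ℝ, HasInteriorImagesOn f Y)
      fun U hU hUne => by
        obtain ⟨f, hf, hne⟩ :=
          exists_continuous_inter_nonConstantLocus_nonempty hcrowded hfunHaus hU hUne
        exact ⟨_, inter_subset_left, hne, f,
          (hasInteriorImagesOn_nonConstantLocus hf).open_inter hU⟩
  exact exists_dense_pairwise_disjoint_of_dense_sUnion hSdense hSdisj hCgood hCdisj hCdense
end

section
/- Every crowded, functionally Hausdorff topological space X that has a π-base consisting of connected sets is 𝔠-resolvable, where 𝔠 = 2^ℵ₀; i.e., X admits a family of 𝔠 pairwise disjoint dense subsets. -/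
/-!
Choose for every nonempty open set `Γ` a continuous `g Γ : X → ℝ` that is not constant on `Γ`.
For each point `x` build by transfinite recursion a decreasing chain of open preconnected cells:
`cell g x α` is the largest open preconnected set around `x` inside the earlier cells on which
each earlier `g (cell g x β)` is locally constant with value `g (cell g x β) x`. The point `x`
stops at the unique stage `α` where `x ∈ cell g x α` but `g (cell g x α)` is not locally constant
at `x`, and it gets the colour `c (g (cell g x α) x)`, where `c : ℝ → ℝ` has dense fibres
(obtained from `ℝ ⧸ ℚ`, which has `𝔠` elements).

A chain cannot shrink forever, as that would inject the ordinals into `X`; so it ends in `∅`.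
Hence for a connected open `B` the points of `B` share their cells up to a stage at which `g` of
the common cell is not constant on `B`. Its values on `B` then fill an interval, and by
connectedness every value `τ` in this interval is attained at a point of `B` where `g` is not
locally constant, which stops there with colour `c τ`: every colour class meets `B`.
-/

open Set Topology

theorem exists_forall_dense_preimage_singleton : ∃ c : ℝ → ℝ, ∀ r, Dense (c ⁻¹' {r}) := by
  -- the fibres are unions of cosets of `ℚ`, and there are `𝔠` cosets
  let H := (Rat.castHom ℝ).toAddMonoidHom.range
  have hH : Cardinal.mk H < Cardinal.continuum :=
    (Cardinal.mk_le_of_surjective (AddMonoidHom.rangeRestrict_surjective _)).trans_lt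
      (Cardinal.mkRat.trans_lt Cardinal.aleph0_lt_continuum)
  have hcard : Cardinal.continuum ≤ Cardinal.mk (ℝ ⧸ H) := by
    by_contra! hlt
    have := Cardinal.mk_congr (AddSubgroup.addGroupEquivQuotientProdAddSubgroup (s := H))
    rw [Cardinal.mk_real, Cardinal.mk_prod, Cardinal.lift_id, Cardinal.lift_id] at this
    exact (Cardinal.mul_lt_of_lt Cardinal.aleph0_le_continuum hlt hH).ne this.symm
  obtain ⟨j, hj⟩ := Cardinal.mk_real ▸ hcard
  refine ⟨Function.invFun j ∘ (↑), fun r => ?_⟩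
  obtain ⟨x, hx⟩ := QuotientAddGroup.mk_surjective (j r)
  refine Dense.mono ?_ ((Homeomorph.addLeft x).surjective.denseRange.comp Rat.denseRange_cast
    (Homeomorph.addLeft x).continuous)
  rintro _ ⟨q, rfl⟩
  have : ((x + q : ℝ) : ℝ ⧸ H) = j r := by
    rw [← hx, eq_comm, QuotientAddGroup.eq, neg_add_cancel_left]
    exact ⟨q, rfl⟩
  simp [this, Function.leftInverse_invFun hj r]

section

universe u v

variable {X : Type u} {Y : Type v} [TopologicalSpace X]

def locallyConstantLocus (g : X → Y) : Set X := {x | ∀ᶠ y in 𝓝 x, g y = g x}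

theorem interior_preimage_singleton_subset_locallyConstantLocus (g : X → Y) (c : Y) :
    interior (g ⁻¹' {c}) ⊆ locallyConstantLocus g := fun x hx => by
  filter_upwards [mem_interior_iff_mem_nhds.1 hx] with y hy
  rw [hy, interior_subset hx]

theorem IsPreconnected.apply_eq_of_subset_locallyConstantLocus {g : X → Y} {S : Set X}
    (hS : IsPreconnected S) (hsub : S ⊆ locallyConstantLocus g) {x y : X} (hx : x ∈ S)
    (hy : y ∈ S) : g x = g y := by
  have := isPreconnected_iff_preconnectedSpace.1 hS
  have : IsLocallyConstant fun z : S => g z := (IsLocallyConstant.iff_eventually_eq _).2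
    fun z => (continuous_subtype_val.tendsto z).eventually (hsub z.2)
  exact this.apply_eq_of_preconnectedSpace ⟨x, hx⟩ ⟨y, hy⟩

theorem IsPreconnected.exists_apply_eq_notMem_locallyConstantLocus [LinearOrder Y]
    [TopologicalSpace Y] [OrderClosedTopology Y] {g : X → Y} (hg : Continuous g) {D : Set X}
    (hD : IsPreconnected D) {a b : X} (ha : a ∈ D) (hb : b ∈ D) {τ : Y}
    (hτ : τ ∈ Ioo (g a) (g b)) : ∃ x ∈ D, g x = τ ∧ x ∉ locallyConstantLocus g := by
  by_contra! h
  have hcover : D ⊆ (g ⁻¹' Iio τ ∪ interior (g ⁻¹' {τ})) ∪ g ⁻¹' Ioi τ := by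
    intro z hz
    rcases lt_trichotomy (g z) τ with hlt | heq | hgt
    · exact Or.inl (Or.inl hlt)
    · refine Or.inl (Or.inr (mem_interior_iff_mem_nhds.2 ?_))
      filter_upwards [h z hz heq] with w hw
      rw [mem_preimage, hw, heq, mem_singleton_iff]
    · exact Or.inr hgt
  obtain ⟨z, -, hlt | hint, hgt⟩ := hD _ _ ((hg.isOpen_preimage _ isOpen_Iio).union isOpen_interior)
    (hg.isOpen_preimage _ isOpen_Ioi) hcover ⟨a, ha, Or.inl hτ.1⟩ ⟨b, hb, hτ.2⟩
  · exact lt_asymm hlt hgt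
  · exact (hgt : τ < g z).ne' (interior_subset (s := g ⁻¹' {τ}) hint)

/-- Stands in for the connected component of `x` in `R`, which need not be open as `X` need not be
locally connected. It is empty if no open preconnected subset of `R` contains `x`. -/
def openComponentIn (R : Set X) (x : X) : Set X :=
  ⋃₀ {S | x ∈ S ∧ IsOpen S ∧ IsPreconnected S ∧ S ⊆ R}

theorem isOpen_openComponentIn (R : Set X) (x : X) : IsOpen (openComponentIn R x) :=
  isOpen_sUnion fun _ hS => hS.2.1

theorem isPreconnected_openComponentIn (R : Set X) (x : X) :
    IsPreconnected (openComponentIn R x) :=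
  isPreconnected_sUnion x _ (fun _ hS => hS.1) fun _ hS => hS.2.2.1

theorem openComponentIn_subset (R : Set X) (x : X) : openComponentIn R x ⊆ R :=
  sUnion_subset fun _ hS => hS.2.2.2

theorem subset_openComponentIn {R S : Set X} {x : X} (hx : x ∈ S) (hS : IsOpen S)
    (hS' : IsPreconnected S) (hSR : S ⊆ R) : S ⊆ openComponentIn R x :=
  subset_sUnion_of_mem ⟨hx, hS, hS', hSR⟩

theorem openComponentIn_eq {R B : Set X} (hB : IsOpen B) (hB' : IsPreconnected B) (hBR : B ⊆ R)
    {y z : X} (hy : y ∈ B) (hz : z ∈ B) : openComponentIn R y = openComponentIn R z := by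
  suffices ∀ y ∈ B, ∀ z ∈ B, openComponentIn R y ⊆ openComponentIn R z from
    (this y hy z hz).antisymm (this z hz y hy)
  intro y hy z hz
  refine sUnion_subset fun S ⟨hyS, hS, hS', hSR⟩ => ?_
  exact subset_union_left.trans <| subset_openComponentIn (Or.inr hz) (hS.union hB)
    (hS'.union y hyS hy hB') (union_subset hSR hBR)

namespace CellChain

section Cell

variable (g : Set X → X → Y)

noncomputable def cell (x : X) : Ordinal.{u} → Set X :=
  Ordinal.lt_wf.fix fun α cell =>
    openComponentIn (⋂ (β) (h : β < α), cell β h ∩ interior (g (cell β h) ⁻¹' {g (cell β h) x})) x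

theorem cell_eq (x : X) (α : Ordinal.{u}) :
    cell g x α = openComponentIn
      (⋂ (β) (_ : β < α), cell g x β ∩ interior (g (cell g x β) ⁻¹' {g (cell g x β) x})) x :=
  Ordinal.lt_wf.fix_eq _ α

theorem isOpen_cell (x : X) (α : Ordinal.{u}) : IsOpen (cell g x α) :=
  cell_eq g x α ▸ isOpen_openComponentIn _ _

theorem isPreconnected_cell (x : X) (α : Ordinal.{u}) : IsPreconnected (cell g x α) :=
  cell_eq g x α ▸ isPreconnected_openComponentIn _ _

theorem cell_subset_locallyConstantLocus {x : X} {α β : Ordinal.{u}} (h : β < α) :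
    cell g x α ⊆ locallyConstantLocus (g (cell g x β)) := by
  rw [cell_eq]
  exact (openComponentIn_subset _ _).trans <| (biInter_subset_of_mem h).trans <|
    inter_subset_right.trans (interior_preimage_singleton_subset_locallyConstantLocus _ _)

def StopsAt (x : X) (α : Ordinal.{u}) : Prop :=
  x ∈ cell g x α ∧ x ∉ locallyConstantLocus (g (cell g x α))

variable {g}

theorem StopsAt.unique {x : X} {α α' : Ordinal.{u}} (h : StopsAt g x α) (h' : StopsAt g x α') :
    α = α' := by
  by_contra hne
  rcases Ne.lt_or_gt hne with hlt | hlt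
  · exact h.2 (cell_subset_locallyConstantLocus g hlt h'.1)
  · exact h'.2 (cell_subset_locallyConstantLocus g hlt h.1)

theorem exists_cell_subset_locallyConstantLocus (x : X) :
    ∃ α, cell g x α ⊆ locallyConstantLocus (g (cell g x α)) := by
  -- otherwise a point leaving the locus at each stage would inject the ordinals into `X`
  by_contra! h
  simp only [not_subset] at h
  choose p hp hploc using h
  refine not_small_ordinal.{u} (small_of_injective (f := p) fun α α' hαα' => ?_)
  by_contra hne
  rcases Ne.lt_or_gt hne with hlt | hlt
  · exact hploc α (hαα' ▸ cell_subset_locallyConstantLocus g hlt (hp α'))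
  · exact hploc α' (hαα' ▸ cell_subset_locallyConstantLocus g hlt (hp α))

end Cell

theorem cell_eq_and_subset_of_forall_lt {g : Set X → X → Y} {B : Set X} (hB : IsOpen B)
    (hB' : IsPreconnected B) {y₀ : X} (hy₀ : y₀ ∈ B) {α : Ordinal.{u}}
    (h : ∀ β < α, (∀ y ∈ B, cell g y β = cell g y₀ β) ∧ B ⊆ cell g y₀ β ∧
      ∀ y ∈ B, g (cell g y₀ β) y = g (cell g y₀ β) y₀) :
    (∀ y ∈ B, cell g y α = cell g y₀ α) ∧ B ⊆ cell g y₀ α := by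
  set R := ⋂ (β) (_ : β < α), cell g y₀ β ∩ interior (g (cell g y₀ β) ⁻¹' {g (cell g y₀ β) y₀})
  have hR : ∀ y ∈ B, cell g y α = openComponentIn R y := fun y hy => by
    rw [cell_eq]
    congr 1
    refine iInter₂_congr fun β hβ => ?_
    rw [(h β hβ).1 y hy, (h β hβ).2.2 y hy]
  have hBR : B ⊆ R := subset_iInter₂ fun β hβ =>
    subset_inter (h β hβ).2.1 (interior_maximal (fun y hy => (h β hβ).2.2 y hy) hB)
  refine ⟨fun y hy => ?_, ?_⟩
  · rw [hR y hy, hR y₀ hy₀]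
    exact openComponentIn_eq hB hB' hBR hy hy₀
  · exact hR y₀ hy₀ ▸ subset_openComponentIn hy₀ hB hB' hBR

section Separating

variable {g : Set X → X → Y}
  (hsep : ∀ Γ : Set X, IsOpen Γ → Γ.Nonempty → ∃ a ∈ Γ, ∃ b ∈ Γ, g Γ a ≠ g Γ b)
include hsep

theorem exists_cell_eq_empty (x : X) : ∃ α, cell g x α = ∅ := by
  obtain ⟨α, hα⟩ := exists_cell_subset_locallyConstantLocus (g := g) x
  refine ⟨α, not_nonempty_iff_eq_empty.1 fun hne => ?_⟩
  obtain ⟨a, ha, b, hb, hab⟩ := hsep _ (isOpen_cell g x α) hne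
  exact hab ((isPreconnected_cell g x α).apply_eq_of_subset_locallyConstantLocus hα ha hb)

theorem exists_cell_nonconstant_on {B : Set X} (hB : IsOpen B) (hB' : IsPreconnected B)
    {y₀ : X} (hy₀ : y₀ ∈ B) :
    ∃ β, (∀ y ∈ B, cell g y β = cell g y₀ β) ∧ B ⊆ cell g y₀ β ∧
      ∃ y ∈ B, g (cell g y₀ β) y ≠ g (cell g y₀ β) y₀ := by
  by_contra! hconst
  have hall : ∀ α, (∀ y ∈ B, cell g y α = cell g y₀ α) ∧ B ⊆ cell g y₀ α := fun α =>
    WellFoundedLT.induction α fun α ih => cell_eq_and_subset_of_forall_lt hB hB' hy₀ fun β hβ =>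
      ⟨(ih β hβ).1, (ih β hβ).2, hconst β (ih β hβ).1 (ih β hβ).2⟩
  obtain ⟨α, hα⟩ := exists_cell_eq_empty hsep y₀
  exact (hα ▸ (hall α).2 hy₀ : y₀ ∈ (∅ : Set X))

theorem exists_stopsAt_apply_mem [LinearOrder Y] [TopologicalSpace Y] [OrderClosedTopology Y]
    [DenselyOrdered Y] (hg : ∀ Γ, Continuous (g Γ)) {B : Set X} (hB : IsOpen B)
    (hB' : IsPreconnected B) (hBne : B.Nonempty) {T : Set Y} (hT : Dense T) :
    ∃ x ∈ B, ∃ α, StopsAt g x α ∧ g (cell g x α) x ∈ T := by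
  obtain ⟨y₀, hy₀⟩ := hBne
  obtain ⟨β, hcell, hBsub, y, hy, hne⟩ := exists_cell_nonconstant_on hsep hB hB' hy₀
  obtain ⟨a, ha, b, hb, hab⟩ : ∃ a ∈ B, ∃ b ∈ B, g (cell g y₀ β) a < g (cell g y₀ β) b := by
    rcases hne.lt_or_gt with h | h
    exacts [⟨y, hy, y₀, hy₀, h⟩, ⟨y₀, hy₀, y, hy, h⟩]
  obtain ⟨τ, hτT, hτ⟩ := hT.exists_between hab
  obtain ⟨x, hx, hxτ, hxloc⟩ := hB'.exists_apply_eq_notMem_locallyConstantLocus (hg _) ha hb hτ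
  exact ⟨x, hx, β, ⟨hcell x hx ▸ hBsub hx, hcell x hx ▸ hxloc⟩, hcell x hx ▸ hxτ ▸ hτT⟩

end Separating

end CellChain

theorem exists_continuous_separating_family
    (hcrowded : ∀ x : X, ¬ IsOpen ({x} : Set X))
    (hfunHaus : ∀ x y : X, x ≠ y → ∃ f : X → ℝ, Continuous f ∧ f x ≠ f y) :
    ∃ g : Set X → X → ℝ, (∀ Γ, Continuous (g Γ)) ∧
      ∀ Γ : Set X, IsOpen Γ → Γ.Nonempty → ∃ a ∈ Γ, ∃ b ∈ Γ, g Γ a ≠ g Γ b := by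
  have : ∀ Γ : Set X, ∃ f : X → ℝ, Continuous f ∧
      (IsOpen Γ → Γ.Nonempty → ∃ a ∈ Γ, ∃ b ∈ Γ, f a ≠ f b) := by
    intro Γ
    by_cases hΓ : IsOpen Γ ∧ Γ.Nonempty
    · obtain ⟨x, hx⟩ := hΓ.2
      obtain ⟨y, hy, hyx⟩ : ∃ y ∈ Γ, y ≠ x := by
        by_contra! h
        exact hcrowded x (eq_singleton_iff_unique_mem.2 ⟨hx, h⟩ ▸ hΓ.1)
      obtain ⟨f, hf, hfne⟩ := hfunHaus y x hyx
      exact ⟨f, hf, fun _ _ => ⟨y, hy, x, hx, hfne⟩⟩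
    · exact ⟨0, continuous_const, fun h₁ h₂ => absurd ⟨h₁, h₂⟩ hΓ⟩
  choose g hg hsep using this
  exact ⟨g, hg, hsep⟩

end

open CellChain

/-- Every crowded, functionally Hausdorff space with a π-base consisting of connected
sets is `𝔠`-resolvable, i.e. admits a family, indexed by `ℝ` (a set of cardinality
`𝔠 = 2^ℵ₀`), of pairwise disjoint dense subsets. -/
theorem crowded_piConnected_functionallyHausdorff_continuum_resolvable
    {X : Type*} [TopologicalSpace X]
    (hcrowded : ∀ x : X, ¬ IsOpen ({x} : Set X))
    (hfunHaus : ∀ x y : X, x ≠ y → ∃ f : X → ℝ, Continuous f ∧ f x ≠ f y)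
    (hpi : ∃ 𝓑 : Set (Set X), (∀ B ∈ 𝓑, IsOpen B ∧ B.Nonempty ∧ IsConnected B) ∧
      ∀ U : Set X, IsOpen U → U.Nonempty → ∃ B ∈ 𝓑, B ⊆ U) :
    ∃ D : ℝ → Set X, (∀ r : ℝ, Dense (D r)) ∧ Pairwise (Function.onFun Disjoint D) := by
  obtain ⟨𝓑, h𝓑, hbase⟩ := hpi
  obtain ⟨g, hg, hsep⟩ := exists_continuous_separating_family hcrowded hfunHaus
  obtain ⟨c, hc⟩ := exists_forall_dense_preimage_singleton
  refine ⟨fun r => {x | ∃ α, StopsAt g x α ∧ c (g (cell g x α) x) = r}, fun r => ?_, ?_⟩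
  · refine dense_iff_inter_open.2 fun U hU hUne => ?_
    obtain ⟨B, hB𝓑, hBU⟩ := hbase U hU hUne
    obtain ⟨hB, hBne, hB'⟩ := h𝓑 B hB𝓑
    obtain ⟨x, hx, α, hstop, hr⟩ :=
      exists_stopsAt_apply_mem hsep hg hB hB'.isPreconnected hBne (hc r)
    exact ⟨x, hBU hx, α, hstop, hr⟩
  · refine fun r r' hne => disjoint_left.2 ?_
    rintro x ⟨α, hα, rfl⟩ ⟨α', hα', rfl⟩
    exact hne (by rw [hα.unique hα'])
end

section
/- Let X be a quasi-regular topological space that has a π-base consisting of connected sets and has no non-empty finite open subspace carrying the indiscrete subspace topology. Then X is ω-resolvable, i.e., X admits a countably infinite family of pairwise disjoint dense subsets. -/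
/-!
A *cell* is a nonempty open set `B` together with open *regions* inside `B`, none of which
contains `closure B`, and pairwise disjoint *parts* `P n ⊆ B` avoiding the regions, such that
every open set meeting `B` meets `P n` or a region. Every nonempty open set `W` contains the
closure of a cell: quasi-regularity gives `N` with `closure N ⊆ W`; if `N` is indiscrete it is
infinite and its points serve as the parts, otherwise a proper open `V ⊂ N` splits `N` into the
regions `V` and `N \ closure V`.

Zorn's lemma, for families that only grow downwards, yields a maximal tree of cells: two closures
are disjoint unless one of them lies in a region of the other cell, and each cell's level is its
parent's level plus one. Give the frontier of a cell the color `level.unpair.1` and let `D n`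
collect the parts `P n` and the frontiers of color `n`; these sets are disjoint because a cell's
parts and frontier avoid its regions. If a connected open set `O` missed `D n`, maximality would
give every cell meeting `O` a child meeting `O`. Were `O` not inside such a cell, it would cross
the frontiers of cells of all consecutive levels below it, one of which has color `n`; so `O` lies
inside every cell it meets, and a new cell could be put inside `O` below all of them.
-/

open Set Function

theorem IsPreconnected.inter_frontier_nonempty {X : Type*} [TopologicalSpace X] {O B : Set X}
    (hO : IsPreconnected O) (hOB : (O ∩ B).Nonempty) (hOB' : ¬ O ⊆ B) :
    (O ∩ frontier B).Nonempty := by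
  by_contra! h
  have hcover : O ⊆ interior B ∪ (closure B)ᶜ := fun x hxO => by
    by_contra hx
    simp only [mem_union, mem_compl_iff, not_or, not_not] at hx
    exact h.subset ⟨hxO, hx.2, hx.1⟩
  rcases hO.subset_or_subset isOpen_interior isClosed_closure.isOpen_compl
      (disjoint_compl_right_iff_subset.2 (interior_subset.trans subset_closure)) hcover with h' | h'
  · exact hOB' (h'.trans interior_subset)
  · obtain ⟨x, hxO, hxB⟩ := hOB
    exact h' hxO (subset_closure hxB)

theorem Nat.exists_unpair_fst_add_eq (n M : ℕ) : ∃ k, (M + k).unpair.1 = n :=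
  ⟨Nat.pair n M - M, by rw [Nat.add_sub_cancel' (Nat.right_le_pair n M), Nat.unpair_pair]⟩

namespace Resolvability

structure Cell (X : Type*) [TopologicalSpace X] where
  carrier : Set X
  level : ℕ
  regions : Set (Set X)
  part : ℕ → Set X
  isOpen_carrier : IsOpen carrier
  carrier_nonempty : carrier.Nonempty
  isOpen_of_mem_regions : ∀ R ∈ regions, IsOpen R
  subset_carrier_of_mem_regions : ∀ R ∈ regions, R ⊆ carrier
  not_closure_subset_of_mem_regions : ∀ R ∈ regions, ¬ closure carrier ⊆ R
  part_subset_carrier : ∀ n, part n ⊆ carrier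
  pairwise_disjoint_part : Pairwise (Disjoint on part)
  disjoint_part_of_mem_regions : ∀ R ∈ regions, ∀ n, Disjoint R (part n)
  inter_part_or_region_nonempty : ∀ n O, IsOpen O → (O ∩ carrier).Nonempty →
    (O ∩ part n).Nonempty ∨ ∃ R ∈ regions, (O ∩ R).Nonempty

variable {X : Type*} [TopologicalSpace X]

namespace Cell

noncomputable def ofIndiscrete {N : Set X} (hN : IsOpen N) (hinf : N.Infinite)
    (hind : ∀ V : Set X, IsOpen V → V ∩ N = ∅ ∨ N ⊆ V) : Cell X where
  carrier := N
  level := 0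
  regions := ∅
  part n := {(Set.Infinite.natEmbedding N hinf n : X)}
  isOpen_carrier := hN
  carrier_nonempty := hinf.nonempty
  isOpen_of_mem_regions := by simp
  subset_carrier_of_mem_regions := by simp
  not_closure_subset_of_mem_regions := by simp
  part_subset_carrier n := singleton_subset_iff.2 (Set.Infinite.natEmbedding N hinf n).2
  pairwise_disjoint_part _ _ hmn :=
    disjoint_singleton.2 fun h => hmn ((Set.Infinite.natEmbedding N hinf).injective (Subtype.ext h))
  disjoint_part_of_mem_regions := by simp
  inter_part_or_region_nonempty n O hO hON :=
    Or.inl ⟨_, (hind O hO).resolve_left hON.ne_empty (Set.Infinite.natEmbedding N hinf n).2, rfl⟩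

def ofSplit {N V : Set X} (hN : IsOpen N) (hV : IsOpen V) (hVN : V ⊆ N) (hVne : V.Nonempty)
    (hNV : ¬ N ⊆ V) : Cell X where
  carrier := N
  level := 0
  regions := {V, N \ closure V}
  part _ := ∅
  isOpen_carrier := hN
  carrier_nonempty := hVne.mono hVN
  isOpen_of_mem_regions := by
    rintro R (rfl | rfl)
    exacts [hV, hN.sdiff isClosed_closure]
  subset_carrier_of_mem_regions := by
    rintro R (rfl | rfl)
    exacts [hVN, sdiff_subset]
  not_closure_subset_of_mem_regions := by
    rintro R (rfl | rfl) h
    · exact hNV (subset_closure.trans h)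
    · obtain ⟨x, hx⟩ := hVne
      exact (h (subset_closure (hVN hx))).2 (subset_closure hx)
  part_subset_carrier _ := empty_subset _
  pairwise_disjoint_part _ _ _ := disjoint_bot_left
  disjoint_part_of_mem_regions _ _ _ := disjoint_bot_right
  inter_part_or_region_nonempty _ O hO hON := by
    refine Or.inr ?_
    by_cases hOV : (O ∩ V).Nonempty
    · exact ⟨V, mem_insert _ _, hOV⟩
    · obtain ⟨x, hxO, hxN⟩ := hON
      exact ⟨N \ closure V, mem_insert_of_mem _ rfl, x, hxO, hxN,
        fun hxV => hOV (mem_closure_iff.1 hxV O hO hxO)⟩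

end Cell

theorem exists_cell_closure_subset
    (hqr : ∀ U : Set X, IsOpen U → U.Nonempty →
      ∃ V : Set X, IsOpen V ∧ V.Nonempty ∧ closure V ⊆ U)
    (hfin : ¬ ∃ U : Set X, IsOpen U ∧ U.Nonempty ∧ U.Finite ∧
      ∀ V : Set X, IsOpen V → V ∩ U = ∅ ∨ U ⊆ V)
    (W : Set X) (hW : IsOpen W) (hWne : W.Nonempty) : ∃ c : Cell X, closure c.carrier ⊆ W := by
  obtain ⟨N, hN, hNne, hNW⟩ := hqr W hW hWne
  by_cases hind : ∀ V : Set X, IsOpen V → V ∩ N = ∅ ∨ N ⊆ V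
  · exact ⟨.ofIndiscrete hN (fun hNfin => hfin ⟨N, hN, hNne, hNfin, hind⟩) hind, hNW⟩
  · push Not at hind
    obtain ⟨V, hV, hVN, hNV⟩ := hind
    exact ⟨.ofSplit hN (hV.inter hN) inter_subset_right hVN
      (fun h => hNV (h.trans inter_subset_left)), hNW⟩

namespace Cell

def Below (s t : Cell X) : Prop := ∃ R ∈ t.regions, closure s.carrier ⊆ R

variable {s t u : Cell X}

theorem Below.closure_subset (h : s.Below t) : closure s.carrier ⊆ t.carrier :=
  let ⟨R, hR, hsR⟩ := h
  hsR.trans (t.subset_carrier_of_mem_regions R hR)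

theorem Below.carrier_subset (h : s.Below t) : s.carrier ⊆ t.carrier :=
  subset_closure.trans h.closure_subset

theorem Below.trans (hst : s.Below t) (htu : t.Below u) : s.Below u :=
  let ⟨R, hR, htR⟩ := htu
  ⟨R, hR, hst.closure_subset.trans (subset_closure.trans htR)⟩

theorem below_irrefl (t : Cell X) : ¬ t.Below t :=
  fun ⟨R, hR, h⟩ => t.not_closure_subset_of_mem_regions R hR h

instance : IsStrictOrder (Cell X) Below where
  irrefl := below_irrefl
  trans _ _ _ := Below.trans

def color (t : Cell X) : ℕ := t.level.unpair.1

def colorSet (t : Cell X) (n : ℕ) : Set X :=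
  t.part n ∪ if t.color = n then frontier t.carrier else ∅

theorem colorSet_subset_closure (t : Cell X) (n : ℕ) : t.colorSet n ⊆ closure t.carrier := by
  refine union_subset ((t.part_subset_carrier n).trans subset_closure) ?_
  split_ifs
  exacts [frontier_subset_closure, empty_subset _]

theorem disjoint_frontier_of_subset_carrier {A : Set X} (hA : A ⊆ t.carrier) :
    Disjoint A (frontier t.carrier) :=
  (disjoint_frontier_iff_isOpen.2 t.isOpen_carrier).symm.mono_left hA

theorem disjoint_colorSet_of_mem_regions (t : Cell X) {R : Set X} (hR : R ∈ t.regions) (n : ℕ) :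
    Disjoint R (t.colorSet n) := by
  refine disjoint_union_right.2 ⟨t.disjoint_part_of_mem_regions R hR n, ?_⟩
  split_ifs
  exacts [disjoint_frontier_of_subset_carrier (t.subset_carrier_of_mem_regions R hR),
    disjoint_empty _]

theorem disjoint_colorSet (t : Cell X) {m n : ℕ} (hmn : m ≠ n) :
    Disjoint (t.colorSet m) (t.colorSet n) := by
  have hpart k := disjoint_frontier_of_subset_carrier (t.part_subset_carrier k)
  simp only [colorSet, disjoint_union_left, disjoint_union_right]
  refine ⟨⟨t.pairwise_disjoint_part hmn, ?_⟩, ?_, ?_⟩ <;> split_ifs <;>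
    simp_all [disjoint_comm]

end Cell

open Cell

def IsChild (F : Set (Cell X)) (s t : Cell X) : Prop :=
  s.Below t ∧ ∀ u ∈ F, s.Below u → u = t ∨ t.Below u

theorem IsChild.mono {F G : Set (Cell X)} {s t : Cell X} (hFG : F ⊆ G) (h : IsChild G s t) :
    IsChild F s t :=
  ⟨h.1, fun u hu => h.2 u (hFG hu)⟩

theorem IsChild.eq {F : Set (Cell X)} {s t t' : Cell X} (h : IsChild F s t) (h' : IsChild F s t')
    (ht : t ∈ F) (ht' : t' ∈ F) : t = t' :=
  (h.2 t' ht' h'.1).elim Eq.symm fun htt' =>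
    (h'.2 t ht h.1).elim id fun ht't => (asymm htt' ht't).elim

structure Admissible (F : Set (Cell X)) : Prop where
  nested : ∀ s ∈ F, ∀ t ∈ F, s ≠ t →
    Disjoint (closure s.carrier) (closure t.carrier) ∨ s.Below t ∨ t.Below s
  wellFoundedOn : F.WellFoundedOn (swap Below)
  level_eq_of_isChild : ∀ s ∈ F, ∀ t ∈ F, IsChild F s t → s.level = t.level + 1

def EndExtends (F G : Set (Cell X)) : Prop :=
  F ⊆ G ∧ ∀ s ∈ G, s ∉ F → ∀ t ∈ F, ¬ t.Below s

structure IsMaxAdmissible (F : Set (Cell X)) : Prop extends Admissible F where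
  maximal : ∀ G, Admissible G → EndExtends F G → G ⊆ F

def colorClass (F : Set (Cell X)) (n : ℕ) : Set X := ⋃ t ∈ F, t.colorSet n

variable {F : Set (Cell X)}

theorem Admissible.pairwise_disjoint_colorClass (hF : Admissible F) :
    Pairwise (Disjoint on colorClass F) := by
  intro m n hmn
  simp only [onFun, colorClass, disjoint_iUnion_left, disjoint_iUnion_right]
  intro t ht s hs
  rcases eq_or_ne s t with rfl | hst
  · exact s.disjoint_colorSet hmn
  rcases hF.nested s hs t ht hst with hd | ⟨R, hR, hsR⟩ | ⟨R, hR, htR⟩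
  · exact hd.mono (s.colorSet_subset_closure m) (t.colorSet_subset_closure n)
  · exact (t.disjoint_colorSet_of_mem_regions hR n).mono_left
      ((s.colorSet_subset_closure m).trans hsR)
  · exact (s.disjoint_colorSet_of_mem_regions hR m).symm.mono_right
      ((t.colorSet_subset_closure n).trans htR)

theorem Admissible.exists_isChild (hF : Admissible F) {s t : Cell X} (hs : s ∈ F) (ht : t ∈ F)
    (hst : s.Below t) : ∃ c ∈ F, s.carrier ⊆ c.carrier ∧ IsChild F c t := by
  obtain ⟨c, ⟨hc, hsc, hct⟩, htop⟩ := (wellFoundedOn_iff.1 hF.wellFoundedOn).has_min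
    {u | u ∈ F ∧ (u = s ∨ s.Below u) ∧ u.Below t} ⟨s, hs, Or.inl rfl, hst⟩
  have hsc' : s.carrier ⊆ c.carrier := hsc.elim (fun h => h ▸ subset_rfl) Below.carrier_subset
  refine ⟨c, hc, hsc', hct, fun u hu hcu => ?_⟩
  rcases eq_or_ne u t with rfl | hut
  · exact Or.inl rfl
  refine (hF.nested u hu t ht hut).elim (fun hd => ?_) fun h => h.elim (fun hut' => ?_) Or.inr
  · exact (c.carrier_nonempty.ne_empty (disjoint_self.1 (hd.mono
      (hcu.carrier_subset.trans subset_closure) (hct.carrier_subset.trans subset_closure)))).elim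
  · exact (htop u ⟨hu, Or.inr (hsc.elim (· ▸ hcu) (·.trans hcu)), hut'⟩ ⟨hcu, hu, hc⟩).elim

theorem EndExtends.trans {F G H : Set (Cell X)} (h₁ : EndExtends F G) (h₂ : EndExtends G H) :
    EndExtends F H := by
  refine ⟨h₁.1.trans h₂.1, fun s hsH hsF t htF => ?_⟩
  by_cases hsG : s ∈ G
  · exact h₁.2 s hsG hsF t htF
  · exact h₂.2 s hsH hsG t (h₁.1 htF)

theorem endExtends_sUnion {𝒞 : Set (Set (Cell X))} (h𝒞 : IsChain EndExtends 𝒞) (hF : F ∈ 𝒞) :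
    EndExtends F (⋃₀ 𝒞) := by
  refine ⟨subset_sUnion_of_mem hF, ?_⟩
  rintro s ⟨G, hG, hsG⟩ hsF t htF hts
  rcases eq_or_ne F G with rfl | hFG
  · exact hsF hsG
  · rcases h𝒞 hF hG hFG with h | h
    · exact h.2 s hsG hsF t htF hts
    · exact hsF (h.1 hsG)

theorem admissible_sUnion {𝒞 : Set (Set (Cell X))} (hadm : ∀ F ∈ 𝒞, Admissible F)
    (h𝒞 : IsChain EndExtends 𝒞) : Admissible (⋃₀ 𝒞) := by
  have hpair : ∀ s ∈ ⋃₀ 𝒞, ∀ t ∈ ⋃₀ 𝒞, ∃ F ∈ 𝒞, s ∈ F ∧ t ∈ F := by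
    rintro s ⟨F, hF, hsF⟩ t ⟨G, hG, htG⟩
    rcases eq_or_ne F G with rfl | hFG
    · exact ⟨F, hF, hsF, htG⟩
    rcases h𝒞 hF hG hFG with h | h
    exacts [⟨G, hG, h.1 hsF, htG⟩, ⟨F, hF, hsF, h.1 htG⟩]
  refine ⟨fun s hs t ht => ?_, ?_, fun s hs t ht hst => ?_⟩
  · obtain ⟨F, hF, hsF, htF⟩ := hpair s hs t ht
    exact (hadm F hF).nested s hsF t htF
  · refine wellFoundedOn_iff_no_descending_seq.2 fun f hf => ?_
    obtain ⟨F, hF, h0⟩ := hf 0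
    refine wellFoundedOn_iff_no_descending_seq.1 (hadm F hF).wellFoundedOn f fun n => ?_
    rcases n.eq_zero_or_pos with rfl | hn
    · exact h0
    · by_contra hnF
      exact (endExtends_sUnion h𝒞 hF).2 (f n) (hf n) hnF (f 0) h0 (f.map_rel_iff.2 hn)
  · obtain ⟨F, hF, hsF, htF⟩ := hpair s hs t ht
    exact (hadm F hF).level_eq_of_isChild s hsF t htF (hst.mono (subset_sUnion_of_mem hF))

theorem exists_isMaxAdmissible : ∃ F : Set (Cell X), IsMaxAdmissible F := by
  obtain ⟨⟨F, hF⟩, hmax⟩ := exists_maximal_of_chains_bounded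
    (r := fun F G : {F : Set (Cell X) // Admissible F} => EndExtends F.1 G.1)
    (fun c hc =>
      have h𝒞 := hc.image_of_map_rel _ EndExtends Subtype.val fun _ _ => id
      ⟨⟨⋃₀ (Subtype.val '' c), admissible_sUnion (by rintro _ ⟨F, -, rfl⟩; exact F.2) h𝒞⟩,
        fun F hF => endExtends_sUnion h𝒞 (mem_image_of_mem _ hF)⟩)
    EndExtends.trans
  exact ⟨F, hF, fun G hG hFG => (hmax ⟨G, hG⟩ hFG).1⟩

theorem Admissible.insert (hF : Admissible F) {c : Cell X} (hnot : ∀ s ∈ F, ¬ s.Below c)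
    (hmeet : ∀ s ∈ F, ¬ Disjoint (closure s.carrier) (closure c.carrier) → c.Below s)
    (hlevel : ∀ t ∈ F, IsChild F c t → c.level = t.level + 1) : Admissible (insert c F) where
  nested := by
    rintro s (rfl | hs) t (rfl | ht) hst
    · exact absurd rfl hst
    · by_cases hd : Disjoint (closure s.carrier) (closure t.carrier)
      · exact Or.inl hd
      · exact Or.inr (Or.inl (hmeet t ht (by rwa [disjoint_comm])))
    · by_cases hd : Disjoint (closure s.carrier) (closure t.carrier)
      · exact Or.inl hd
      · exact Or.inr (Or.inr (hmeet s hs hd))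
    · exact hF.nested s hs t ht hst
  wellFoundedOn := hF.wellFoundedOn.insert c
  level_eq_of_isChild := by
    rintro s (rfl | hs) t (rfl | ht) hst
    · exact absurd hst.1 (below_irrefl _)
    · exact hlevel t ht (hst.mono (subset_insert _ _))
    · exact absurd hst.1 (hnot s hs)
    · exact hF.level_eq_of_isChild s hs t ht (hst.mono (subset_insert _ _))

theorem endExtends_insert {c : Cell X} (hnot : ∀ s ∈ F, ¬ s.Below c) :
    EndExtends F (insert c F) := by
  refine ⟨subset_insert _ _, ?_⟩
  rintro s (rfl | hs) hsF t ht
  exacts [hnot t ht, absurd hs hsF]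

section Maximal

variable (hcell : ∀ W : Set X, IsOpen W → W.Nonempty → ∃ c : Cell X, closure c.carrier ⊆ W)
  (hF : IsMaxAdmissible F)
include hcell hF

theorem IsMaxAdmissible.exists_inter_nonempty_forall_not_subset {W : Set X} (hW : IsOpen W)
    (hWne : W.Nonempty) : ∃ s ∈ F, (s.carrier ∩ W).Nonempty ∧ ∀ R ∈ s.regions, ¬ W ⊆ R := by
  classical
  by_contra! H
  obtain ⟨c₀, hc₀W⟩ := hcell W hW hWne
  -- `IsChild F c₀ t` only involves the carrier of `c₀`, so `c` gets the level of a child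
  let c : Cell X :=
    { c₀ with level := if h : ∃ t ∈ F, IsChild F c₀ t then h.choose.level + 1 else 0 }
  have hbelow : ∀ s ∈ F, (s.carrier ∩ W).Nonempty → c.Below s := fun s hs hsW =>
    let ⟨R, hR, hWR⟩ := H s hs hsW
    ⟨R, hR, hc₀W.trans hWR⟩
  have hsubW : ∀ s ∈ F, s.carrier ⊆ W → c.Below s := fun s hs hsW =>
    hbelow s hs (by rw [inter_eq_left.2 hsW]; exact s.carrier_nonempty)
  have hnot : ∀ s ∈ F, ¬ s.Below c := fun s hs hsc =>
    below_irrefl s (hsc.trans (hsubW s hs (hsc.carrier_subset.trans (subset_closure.trans hc₀W))))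
  have hmeet : ∀ s ∈ F, ¬ Disjoint (closure s.carrier) (closure c.carrier) → c.Below s :=
    fun s hs hd => hbelow s hs <| (closure_inter_open_nonempty_iff hW).1 <|
      (not_disjoint_iff_nonempty_inter.1 hd).mono (inter_subset_inter_right _ hc₀W)
  have hlevel : ∀ t ∈ F, IsChild F c t → c.level = t.level + 1 := fun t ht hct => by
    have h : ∃ t ∈ F, IsChild F c₀ t := ⟨t, ht, hct⟩
    change (if h : ∃ t ∈ F, IsChild F c₀ t then h.choose.level + 1 else 0) = t.level + 1
    rw [dif_pos h, h.choose_spec.2.eq hct h.choose_spec.1 ht]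
  have hcF : c ∈ F := hF.maximal _ (hF.insert hnot hmeet hlevel) (endExtends_insert hnot)
    (mem_insert c F)
  exact below_irrefl c (hsubW c hcF (subset_closure.trans hc₀W))

theorem IsMaxAdmissible.exists_below_inter_nonempty {t : Cell X} (ht : t ∈ F) {R : Set X}
    (hR : R ∈ t.regions) {W : Set X} (hW : IsOpen W) (hWne : W.Nonempty) (hWR : W ⊆ R) :
    ∃ s ∈ F, s.Below t ∧ (s.carrier ∩ W).Nonempty := by
  by_contra! H
  obtain ⟨s, hs, hsW, hnot⟩ := hF.exists_inter_nonempty_forall_not_subset hcell hW hWne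
  rcases eq_or_ne s t with rfl | hst
  · exact hnot R hR hWR
  rcases hF.nested s hs t ht hst with hd | hbelow | ⟨R', hR', htR'⟩
  · obtain ⟨x, hxs, hxW⟩ := hsW
    exact disjoint_left.1 hd (subset_closure hxs)
      (subset_closure (t.subset_carrier_of_mem_regions R hR (hWR hxW)))
  · exact hsW.ne_empty (H s hs hbelow)
  · exact hnot R' hR' (hWR.trans ((t.subset_carrier_of_mem_regions R hR).trans
      (subset_closure.trans htR')))

section Color

variable {O : Set X} (hO : IsOpen O) {n : ℕ} (hmiss : ∀ t ∈ F, Disjoint O (t.colorSet n))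
include hO hmiss

theorem IsMaxAdmissible.exists_isChild_inter_nonempty {t : Cell X} (ht : t ∈ F)
    (hOt : (O ∩ t.carrier).Nonempty) : ∃ c ∈ F, IsChild F c t ∧ (O ∩ c.carrier).Nonempty := by
  have hpart : ¬ (O ∩ t.part n).Nonempty := fun h =>
    h.ne_empty ((hmiss t ht).mono_right subset_union_left).inter_eq
  obtain ⟨R, hR, hOR⟩ := (t.inter_part_or_region_nonempty n O hO hOt).resolve_left hpart
  obtain ⟨s, hs, hst, hsOR⟩ := hF.exists_below_inter_nonempty hcell ht hR
    (hO.inter (t.isOpen_of_mem_regions R hR)) hOR inter_subset_right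
  obtain ⟨c, hc, hsc, hct⟩ := hF.exists_isChild hs ht hst
  exact ⟨c, hc, hct, hsOR.mono fun x hx => ⟨hx.2.1, hsc hx.1⟩⟩

theorem IsMaxAdmissible.subset_carrier_of_inter_nonempty (hOc : IsPreconnected O) {t : Cell X}
    (ht : t ∈ F) (hOt : (O ∩ t.carrier).Nonempty) : O ⊆ t.carrier := by
  by_contra hOt'
  have hdescend : ∀ k, ∃ u ∈ F, (O ∩ u.carrier).Nonempty ∧ ¬ O ⊆ u.carrier ∧
      u.level = t.level + k := by
    intro k
    induction k with
    | zero => exact ⟨t, ht, hOt, hOt', rfl⟩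
    | succ k ih =>
      obtain ⟨u, hu, hOu, hOu', hlevel⟩ := ih
      obtain ⟨c, hc, hcu, hOcne⟩ := hF.exists_isChild_inter_nonempty hcell hO hmiss hu hOu
      refine ⟨c, hc, hOcne, fun h => hOu' (h.trans hcu.1.carrier_subset), ?_⟩
      rw [hF.level_eq_of_isChild c hc u hu hcu, hlevel, add_assoc]
  obtain ⟨k, hk⟩ := Nat.exists_unpair_fst_add_eq n t.level
  obtain ⟨u, hu, hOu, hOu', hlevel⟩ := hdescend k
  have hcolor : u.color = n := by rw [color, hlevel, hk]
  obtain ⟨x, hxO, hxu⟩ := hOc.inter_frontier_nonempty hOu hOu'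
  exact disjoint_left.1 (hmiss u hu) hxO (Or.inr (by rwa [if_pos hcolor]))

end Color

theorem IsMaxAdmissible.inter_colorClass_nonempty {O : Set X} (hO : IsOpen O)
    (hOc : IsPreconnected O) (hOne : O.Nonempty) (n : ℕ) : (O ∩ colorClass F n).Nonempty := by
  rw [← not_disjoint_iff_nonempty_inter]
  intro hdisj
  have hmiss : ∀ t ∈ F, Disjoint O (t.colorSet n) := fun t ht =>
    hdisj.mono_right (subset_biUnion_of_mem (u := fun t : Cell X => t.colorSet n) ht)
  obtain ⟨s, hs, hsO, hnot⟩ := hF.exists_inter_nonempty_forall_not_subset hcell hO hOne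
  obtain ⟨c, hc, hcs, hOcne⟩ :=
    hF.exists_isChild_inter_nonempty hcell hO hmiss hs (by rwa [inter_comm])
  obtain ⟨R, hR, hcR⟩ := hcs.1
  have hOsub : O ⊆ c.carrier := hF.subset_carrier_of_inter_nonempty hcell hO hmiss hOc hc hOcne
  exact hnot R hR (hOsub.trans (subset_closure.trans hcR))

end Maximal

end Resolvability

/-- Let `X` be quasi-regular, have a π-base consisting of connected sets, and have no
non-empty finite open subspace carrying the indiscrete subspace topology (the subspace-open
subsets of such a `U` would be exactly `∅` and `U`, i.e. every open `V` satisfies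
`V ∩ U = ∅` or `U ⊆ V`). Then `X` is `ω`-resolvable: it admits a countably infinite
(ℕ-indexed) family of pairwise disjoint dense subsets. -/
theorem quasiRegular_piConnected_omega_resolvable {X : Type*} [TopologicalSpace X]
    (hqr : ∀ U : Set X, IsOpen U → U.Nonempty →
      ∃ V : Set X, IsOpen V ∧ V.Nonempty ∧ closure V ⊆ U)
    (hpi : ∃ 𝓑 : Set (Set X), (∀ B ∈ 𝓑, IsOpen B ∧ B.Nonempty ∧ IsConnected B) ∧
      ∀ U : Set X, IsOpen U → U.Nonempty → ∃ B ∈ 𝓑, B ⊆ U)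
    (hnoindiscrete : ¬ ∃ U : Set X, IsOpen U ∧ U.Nonempty ∧ U.Finite ∧
      ∀ V : Set X, IsOpen V → V ∩ U = ∅ ∨ U ⊆ V) :
    ∃ D : ℕ → Set X, (∀ n : ℕ, Dense (D n)) ∧ Pairwise (Function.onFun Disjoint D) := by
  obtain ⟨𝓑, h𝓑, h𝓑U⟩ := hpi
  obtain ⟨F, hF⟩ := Resolvability.exists_isMaxAdmissible (X := X)
  have hcell := Resolvability.exists_cell_closure_subset hqr hnoindiscrete
  refine ⟨Resolvability.colorClass F, fun n => ?_, hF.pairwise_disjoint_colorClass⟩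
  refine dense_iff_inter_open.2 fun U hU hUne => ?_
  obtain ⟨B, hB, hBU⟩ := h𝓑U U hU hUne
  obtain ⟨hBo, hBne, hBc⟩ := h𝓑 B hB
  exact (hF.inter_colorClass_nonempty hcell hBo hBc.isPreconnected hBne n).mono
    (inter_subset_inter_left _ hBU)
end

section
/- Let I be a set and let X be a subspace of the product space ℝ^I such that X is nowhere 0-dimensional, i.e., no non-empty open subspace of X has a basis consisting of clopen sets. Then for every non-empty open set U ⊆ X there exists i ∈ I such that the image π_i[U] under the i-th coordinate projection π_i : ℝ^I → ℝ has non-empty interior in ℝ. In particular, the family {π_i↾X : i ∈ I} of restricted projections is nowhere constant on X. -/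
/-!
If every coordinate projection of a non-empty open `U ⊆ X` had an image with empty interior,
each image would miss a dense set of reals. Open intervals with endpoints in these dense sets form
a basis of `ℝ`, and their preimages in `U` are clopen because the endpoints are never attained.
The induced product basis then makes `U` 0-dimensional.
-/

open Set TopologicalSpace Topology

section OrderTopology

variable {α : Type*} [LinearOrder α] [TopologicalSpace α] [OrderTopology α]

theorem isTopologicalBasis_Ioo_of_dense [DenselyOrdered α] [NoMinOrder α] [NoMaxOrder α]
    {D : Set α} (hD : Dense D) :
    IsTopologicalBasis {s | ∃ a ∈ D, ∃ b ∈ D, s = Ioo a b} := by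
  refine isTopologicalBasis_of_isOpen_of_nhds ?_ fun x u hxu hu => ?_
  · rintro _ ⟨a, -, b, -, rfl⟩
    exact isOpen_Ioo
  · obtain ⟨l, r, ⟨hlx, hxr⟩, hlru⟩ := mem_nhds_iff_exists_Ioo_subset.mp (hu.mem_nhds hxu)
    obtain ⟨a, haD, hla, hax⟩ := hD.exists_between hlx
    obtain ⟨b, hbD, hxb, hbr⟩ := hD.exists_between hxr
    exact ⟨Ioo a b, ⟨a, haD, b, hbD, rfl⟩, ⟨hax, hxb⟩,
      (Ioo_subset_Ioo hla.le hbr.le).trans hlru⟩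

theorem isClopen_preimage_Ioo_of_notMem_range {Y : Type*} [TopologicalSpace Y] {g : Y → α}
    (hg : Continuous g) {a b : α} (ha : a ∉ range g) (hb : b ∉ range g) :
    IsClopen (g ⁻¹' Ioo a b) := by
  have hIcc : g ⁻¹' Ioo a b = g ⁻¹' Icc a b := by
    ext y
    simp only [mem_preimage, mem_Ioo, mem_Icc]
    refine ⟨fun h => ⟨h.1.le, h.2.le⟩, fun h => ⟨h.1.lt_of_ne ?_, h.2.lt_of_ne ?_⟩⟩
    · rintro rfl
      exact ha ⟨y, rfl⟩
    · intro hyb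
      exact hb ⟨y, hyb⟩
  exact ⟨hIcc ▸ isClosed_Icc.preimage hg, isOpen_Ioo.preimage hg⟩

theorem isTopologicalBasis_isClopen_of_interior_range_eq_empty [DenselyOrdered α]
    [NoMinOrder α] [NoMaxOrder α] {ι Y : Type*} [TopologicalSpace Y] {f : Y → ι → α}
    (hf : IsInducing f) (hrange : ∀ i, interior (range fun y => f y i) = ∅) :
    IsTopologicalBasis {C : Set Y | IsClopen C} := by
  have hcoord : ∀ i, Continuous fun y => f y i := fun i => (continuous_apply i).comp hf.continuous
  have hbasis := (isTopologicalBasis_pi fun i =>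
    isTopologicalBasis_Ioo_of_dense (interior_eq_empty_iff_dense_compl.mp (hrange i))).isInducing hf
  refine hbasis.of_isOpen_of_subset (fun C hC => hC.isOpen) ?_
  rintro _ ⟨_, ⟨U, F, hU, rfl⟩, rfl⟩
  have hpi : f ⁻¹' (F : Set ι).pi U = ⋂ i ∈ F, (fun y => f y i) ⁻¹' U i := by
    ext y
    simp
  rw [mem_ofPred_eq, hpi]
  refine isClopen_biInter_finset fun i hi => ?_
  obtain ⟨a, ha, b, hb, hUi⟩ := hU i hi
  exact hUi ▸ isClopen_preimage_Ioo_of_notMem_range (hcoord i) ha hb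

end OrderTopology

theorem Set.nontrivial_of_interior_nonempty {X : Type*} [TopologicalSpace X] [PerfectSpace X]
    {s : Set X} (hs : (interior s).Nonempty) : s.Nontrivial := by
  by_contra hsub
  obtain rfl | ⟨x, rfl⟩ := (not_nontrivial_iff.mp hsub).eq_empty_or_singleton
  · simp at hs
  · simp [interior_singleton] at hs

/-- Let `X ⊆ ℝ^I` (with the subspace topology) be nowhere 0-dimensional: no non-empty
open subspace of `X` has a basis consisting of clopen sets. Then for every non-empty
open `U ⊆ X` there is `i ∈ I` such that `π_i[U]` has non-empty interior in `ℝ`;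
in particular the family of restricted projections `{π_i ↾ X : i ∈ I}` is nowhere
constant on `X`. -/
theorem nowhere_zero_dimensional_projections {I : Type*} (X : Set (I → ℝ))
    (h0dim : ∀ U : Set X, IsOpen U → U.Nonempty →
      ¬ ∃ 𝒞 : Set (Set U), (∀ C ∈ 𝒞, IsClopen C) ∧
        TopologicalSpace.IsTopologicalBasis 𝒞) :
    (∀ U : Set X, IsOpen U → U.Nonempty →
      ∃ i : I, (interior ((fun x : X => (x : I → ℝ) i) '' U)).Nonempty) ∧
    (∀ U : Set X, IsOpen U → U.Nonempty →
      ∃ i : I, ((fun x : X => (x : I → ℝ) i) '' U).Nontrivial) := by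
  have hinterior : ∀ U : Set X, IsOpen U → U.Nonempty →
      ∃ i : I, (interior ((fun x : X => (x : I → ℝ) i) '' U)).Nonempty := by
    intro U hU hne
    by_contra! hempty
    refine h0dim U hU hne ⟨_, fun C hC => hC, ?_⟩
    refine isTopologicalBasis_isClopen_of_interior_range_eq_empty
      (f := fun y : U => ((y : X) : I → ℝ)) (IsInducing.subtypeVal.comp .subtypeVal) fun i => ?_
    simpa [image_eq_range] using hempty i
  refine ⟨hinterior, fun U hU hne => ?_⟩
  obtain ⟨i, hi⟩ := hinterior U hU hne
  exact ⟨i, nontrivial_of_interior_nonempty hi⟩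
end
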